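/- Let (G,σ) be a finite simple graph with a linear order on its vertices, and let G□G carry the lexicographic order induced by σ on both factors. Then FF(G□G, lex) = 2^⌈log₂ FF(G,σ)⌉. -/

import Mathlib

/-!
With colours shifted to start at `0`, a colouring is the First-Fit colouring for an order
exactly when no vertex shares its colour with an earlier neighbour and every smaller colour
occurs on an earlier neighbour. This property is inherited by `(u, v) ↦ f u XOR g v` on
`G □ H` with the lexicographic order (the nim-sum rule of Grundy values), so the colours used
on `G □ G` are the XORs of two colours below `K = FF(G, σ)`, that is, all of
`[0, 2 ^ ⌈log₂ K⌉)`.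
-/

open SimpleGraph

/-- First-Fit (greedy) coloring of `G` with respect to the vertex ordering given by the
injective position function `ord` (vertex `u` comes before `v` iff `ord u < ord v`).
Each vertex receives the smallest positive integer not used on earlier neighbors. -/
noncomputable def firstFit {V : Type*} (G : SimpleGraph V) (ord : V → ℕ) : V → ℕ :=
  (InvImage.wf ord Nat.lt_wfRel.wf).fix
    (fun v ih => sInf {c : ℕ | 1 ≤ c ∧ ∀ u, ∀ h : ord u < ord v, G.Adj u v → ih u h ≠ c})

/-- `FFColors G ord` is the number of colors used by the First-Fit coloring. -/
noncomputable def FFColors {V : Type*} [Fintype V] (G : SimpleGraph V) (ord : V → ℕ) : ℕ :=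
  (Finset.univ.image (firstFit G ord)).card

open Classical in
/-- First-Fit coloring of `(G, ord)` subject to the pre-coloring `C₀` on the set `S`:
vertices of `S` keep their pre-assigned colors and are skipped by the scan; every other
vertex receives the smallest positive integer not already assigned (or pre-assigned)
to a neighbor. -/
noncomputable def firstFitWith {V : Type*} (G : SimpleGraph V) (ord : V → ℕ)
    (S : Set V) (C₀ : V → ℕ) : V → ℕ :=
  (InvImage.wf ord Nat.lt_wfRel.wf).fix
    (fun v ih =>
      if v ∈ S then C₀ v
      else sInf {c : ℕ | 1 ≤ c ∧ (∀ u, G.Adj u v → u ∈ S → C₀ u ≠ c) ∧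
        ∀ u, ∀ h : ord u < ord v, G.Adj u v → u ∉ S → ih u h ≠ c})

/-- Position function of the lexicographic order on `V × W` induced by the position
functions `σ` on `V` and `σ'` on `W` (for injective `σ, σ'`: `(u,v)` comes before
`(u',v')` iff `σ u < σ u'`, or `u = u'` and `σ' v < σ' v'`). -/
noncomputable def lexPos {V W : Type*} [Fintype W] (σ : V → ℕ) (σ' : W → ℕ) : V × W → ℕ :=
  fun p => σ p.1 * (Finset.univ.sup σ' + 1) + σ' p.2

/-- A proper coloring with colors in the positive integers. -/
def IsProperColoring {V : Type*} (G : SimpleGraph V) (C : V → ℕ) : Prop :=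
  (∀ v, 1 ≤ C v) ∧ ∀ ⦃u v⦄, G.Adj u v → C u ≠ C v

/-- `D` is a `(C, ord)`-descent: `D = {v} ∪ N` where `C v = y`, `x < y` is a (positive)
color, `N` is the set of neighbors of `v` of color `x`, and every `u ∈ N` comes after
`v` in the order. -/
def IsDescent {V : Type*} (G : SimpleGraph V) (ord : V → ℕ) (C : V → ℕ) (D : Set V) : Prop :=
  ∃ v x, 1 ≤ x ∧ x < C v ∧
    (∀ u, G.Adj u v → C u = x → ord v < ord u) ∧
    D = insert v {u | G.Adj u v ∧ C u = x}

/-- The Grundy number: the maximum of `FFColors G ord` over all vertex orderings. -/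
noncomputable def grundy {V : Type*} [Fintype V] (G : SimpleGraph V) : ℕ :=
  sSup {n | ∃ ord : V → ℕ, Function.Injective ord ∧ FFColors G ord = n}

/-- The independence number of `G`. -/
noncomputable def indepNum {V : Type*} [Fintype V] (G : SimpleGraph V) : ℕ :=
  sSup {n | ∃ s : Finset V, (∀ u ∈ s, ∀ v ∈ s, ¬ G.Adj u v) ∧ s.card = n}

/-- An `m × n` Latin rectangle: entries in `{1, …, n}`, no repeats in rows or columns. -/
def IsLatinRectangle {m n : ℕ} (R : Fin m → Fin n → ℕ) : Prop :=
  (∀ i j, R i j ∈ Finset.Icc 1 n) ∧ (∀ i, Function.Injective (R i)) ∧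
    (∀ j, Function.Injective (fun i => R i j))

/-- `S` is a greedy defining set of the rectangle `R` (cells scanned in lexicographic,
i.e. row-by-row, order): the greedy completion, which skips the cells of `S` (fixed to
their values in `R`) and places in each other cell the smallest positive integer not yet
appearing in its row or column, reproduces `R`.  This is First-Fit on the rook's graph
`K_m □ K_n` subject to the pre-coloring of `S` by `R`. -/
noncomputable def IsRectGDS {m n : ℕ} (R : Fin m → Fin n → ℕ) (S : Set (Fin m × Fin n)) : Prop :=
  firstFitWith ((⊤ : SimpleGraph (Fin m)).boxProd (⊤ : SimpleGraph (Fin n)))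
    (lexPos Fin.val Fin.val) S (fun p => R p.1 p.2) = fun p => R p.1 p.2

/-- The Latin square `L_k` of order `2^k`: the entry in row `i`, column `j` is
`2^k - (i XOR j)`; equivalently the `k`-fold tensor product of `[[2,1],[1,2]]`. -/
def Lsquare (k : ℕ) : Fin (2 ^ k) → Fin (2 ^ k) → ℕ :=
  fun i j => 2 ^ k - (i.val ^^^ j.val)

open Finset

lemma xor_two_pow_lt_two_pow {s z : ℕ} (h₁ : 2 ^ s ≤ z) (h₂ : z < 2 ^ (s + 1)) :
    z ^^^ 2 ^ s < 2 ^ s := by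
  by_contra! h
  have hlt : z ^^^ 2 ^ s < 2 ^ (s + 1) :=
    Nat.xor_lt_two_pow h₂ (Nat.pow_lt_pow_succ one_lt_two)
  have hbit := Nat.testBit_of_two_pow_le_and_two_pow_add_one_gt h hlt
  simp [Nat.testBit_xor, Nat.testBit_of_two_pow_le_and_two_pow_add_one_gt h₁ h₂] at hbit

lemma image₂_xor_range_self {n : ℕ} (hn : 0 < n) :
    image₂ (· ^^^ ·) (range n) (range n) = range (2 ^ Nat.clog 2 n) := by
  have hn_le : n ≤ 2 ^ Nat.clog 2 n := Nat.le_pow_clog one_lt_two n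
  ext z
  simp only [mem_image₂, mem_range]
  constructor
  · rintro ⟨a, ha, b, hb, rfl⟩
    exact Nat.xor_lt_two_pow (by omega) (by omega)
  · intro hz
    rcases lt_or_ge z n with hzn | hnz
    · exact ⟨z, hzn, 0, hn, Nat.xor_zero z⟩
    · have hn1 : 1 < n := by
        by_contra!
        simp_all [show n = 1 by omega]
      have hclog : Nat.clog 2 n - 1 + 1 = Nat.clog 2 n := by
        have := Nat.clog_pos one_lt_two hn1
        omega
      have htop : 2 ^ (Nat.clog 2 n - 1) < n := Nat.pow_pred_clog_lt_self one_lt_two hn1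
      have hlow := xor_two_pow_lt_two_pow (s := Nat.clog 2 n - 1) (z := z) (by omega)
        (by rwa [hclog])
      refine ⟨2 ^ (Nat.clog 2 n - 1), htop, z ^^^ 2 ^ (Nat.clog 2 n - 1), by omega, ?_⟩
      rw [Nat.xor_comm z, Nat.xor_xor_cancel_left]

lemma Finset.eq_range_card_of_forall_lt_mem {s : Finset ℕ} (h : ∀ x ∈ s, ∀ y < x, y ∈ s) :
    s = range #s := by
  refine eq_of_subset_of_card_le (fun x hx => mem_range.mpr ?_) (card_range _).le
  have hsub : range (x + 1) ⊆ s := fun y hy =>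
    (Nat.lt_succ_iff.mp (mem_range.mp hy)).eq_or_lt.elim (· ▸ hx) (h x hx y)
  simpa using card_le_card hsub

section lexPos

variable {V W : Type*} [Fintype W] (σ : V → ℕ) (σ' : W → ℕ)

lemma lexPos_lt_lexPos_left_iff {u u' : V} (v : W) :
    lexPos σ σ' (u', v) < lexPos σ σ' (u, v) ↔ σ u' < σ u := by
  simp only [lexPos, Nat.add_lt_add_iff_right]
  exact Nat.mul_lt_mul_right (Nat.succ_pos _)

lemma lexPos_lt_lexPos_right_iff (u : V) {v v' : W} :
    lexPos σ σ' (u, v') < lexPos σ σ' (u, v) ↔ σ' v' < σ' v := by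
  simp only [lexPos, Nat.add_lt_add_iff_left]

end lexPos

/-- Colours are `0, 1, 2, …` here; the First-Fit colouring is `firstFit G ord - 1`. -/
structure IsGreedyColoring {V : Type*} (G : SimpleGraph V) (ord : V → ℕ) (f : V → ℕ) :
    Prop where
  ne_of_adj : ∀ ⦃u v⦄, ord u < ord v → G.Adj u v → f u ≠ f v
  exists_adj_of_lt : ∀ ⦃v x⦄, x < f v → ∃ u, ord u < ord v ∧ G.Adj u v ∧ f u = x

namespace IsGreedyColoring

variable {V : Type*} {G : SimpleGraph V} {ord : V → ℕ} {f g : V → ℕ}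

lemma le_of_forall_lt_eq (hf : IsGreedyColoring G ord f) (hg : IsGreedyColoring G ord g) {v : V}
    (h : ∀ u, ord u < ord v → f u = g u) : f v ≤ g v := by
  by_contra! hlt
  obtain ⟨u, hu, hadj, hfu⟩ := hf.exists_adj_of_lt hlt
  exact hg.ne_of_adj hu hadj (h u hu ▸ hfu)

lemma unique (hf : IsGreedyColoring G ord f) (hg : IsGreedyColoring G ord g) : f = g := by
  funext v
  induction v using (InvImage.wf ord Nat.lt_wfRel.wf).induction with
  | _ v ih =>
    exact le_antisymm (hf.le_of_forall_lt_eq hg ih)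
      (hg.le_of_forall_lt_eq hf fun u hu => (ih u hu).symm)

lemma boxProd_lexPos {W : Type*} [Fintype W] {H : SimpleGraph W} {σ' : W → ℕ} {g : W → ℕ}
    (hf : IsGreedyColoring G ord f) (hg : IsGreedyColoring H σ' g) :
    IsGreedyColoring (G □ H) (lexPos ord σ') (fun p => f p.1 ^^^ g p.2) where
  ne_of_adj := by
    rintro ⟨u', v'⟩ ⟨u, v⟩ hlt hadj
    rcases hadj with ⟨hG, rfl : v' = v⟩ | ⟨hH, rfl : u' = u⟩
    · have hne := hf.ne_of_adj ((lexPos_lt_lexPos_left_iff ord σ' v').mp hlt) hG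
      exact fun h => hne (Nat.xor_left_inj.mp h)
    · have hne := hg.ne_of_adj ((lexPos_lt_lexPos_right_iff ord σ' u').mp hlt) hH
      exact fun h => hne (Nat.xor_right_inj.mp h)
  exists_adj_of_lt := by
    rintro ⟨u, v⟩ x hx
    rcases Nat.lt_xor_cases hx with h | h
    · obtain ⟨u', hlt, hadj, hfu'⟩ := hf.exists_adj_of_lt h
      exact ⟨(u', v), (lexPos_lt_lexPos_left_iff ord σ' v).mpr hlt, boxProd_adj_left.mpr hadj,
        by simp [hfu']⟩
    · obtain ⟨v', hlt, hadj, hgv'⟩ := hg.exists_adj_of_lt h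
      exact ⟨(u, v'), (lexPos_lt_lexPos_right_iff ord σ' u).mpr hlt, boxProd_adj_right.mpr hadj,
        by simp [hgv', Nat.xor_comm x]⟩

end IsGreedyColoring

section firstFit

variable {V : Type*} (G : SimpleGraph V) (ord : V → ℕ)

lemma firstFit_eq_sInf (v : V) :
    firstFit G ord v =
      sInf {c : ℕ | 1 ≤ c ∧ ∀ u, ord u < ord v → G.Adj u v → firstFit G ord u ≠ c} := by
  rw [firstFit, WellFounded.fix_eq]

lemma firstFit_mem [Finite V] (v : V) :
    firstFit G ord v ∈
      {c : ℕ | 1 ≤ c ∧ ∀ u, ord u < ord v → G.Adj u v → firstFit G ord u ≠ c} := by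
  obtain ⟨M, hM⟩ := (Set.finite_range (firstFit G ord)).bddAbove
  rw [firstFit_eq_sInf]
  exact Nat.sInf_mem ⟨M + 1, by omega, fun u _ _ => by
    have := hM (Set.mem_range_self u)
    omega⟩

lemma isGreedyColoring_firstFit_sub_one [Finite V] :
    IsGreedyColoring G ord (fun v => firstFit G ord v - 1) where
  ne_of_adj u v hlt hadj := by
    have hu : 1 ≤ firstFit G ord u := (firstFit_mem G ord u).1
    obtain ⟨hv, hne⟩ := firstFit_mem G ord v
    have := hne u hlt hadj
    omega
  exists_adj_of_lt v x hx := by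
    by_contra! h
    have hmem : x + 1 ∈
        {c : ℕ | 1 ≤ c ∧ ∀ u, ord u < ord v → G.Adj u v → firstFit G ord u ≠ c} :=
      ⟨by omega, fun u hu hadj => by have := h u hu hadj; omega⟩
    have := Nat.sInf_le hmem
    rw [← firstFit_eq_sInf] at this
    omega

variable {G ord}

lemma IsGreedyColoring.firstFit_eq [Finite V] {f : V → ℕ} (hf : IsGreedyColoring G ord f)
    (v : V) : firstFit G ord v = f v + 1 := by
  rw [← (isGreedyColoring_firstFit_sub_one G ord).unique hf]
  dsimp only
  have := (firstFit_mem G ord v).1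
  omega

lemma IsGreedyColoring.FFColors_eq [Fintype V] {f : V → ℕ} (hf : IsGreedyColoring G ord f) :
    FFColors G ord = #(univ.image f) := by
  rw [FFColors, funext hf.firstFit_eq]
  change #(univ.image ((· + 1) ∘ f)) = _
  rw [← image_image, card_image_of_injective _ (add_left_injective 1)]

lemma IsGreedyColoring.image_univ_eq_range [Fintype V] {f : V → ℕ}
    (hf : IsGreedyColoring G ord f) : univ.image f = range #(univ.image f) := by
  refine eq_range_card_of_forall_lt_mem fun x hx y hy => ?_
  obtain ⟨v, -, rfl⟩ := mem_image.mp hx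
  obtain ⟨u, -, -, rfl⟩ := hf.exists_adj_of_lt hy
  exact mem_image_of_mem f (mem_univ u)

end firstFit

theorem FF_boxProd_self_lex_eq_pow_general {V : Type*} [Fintype V] [Nonempty V]
    (G : SimpleGraph V) (σ : V → ℕ) :
    FFColors (G.boxProd G) (lexPos σ σ) = 2 ^ Nat.clog 2 (FFColors G σ) := by
  set f := fun v => firstFit G σ v - 1
  have hf : IsGreedyColoring G σ f := isGreedyColoring_firstFit_sub_one G σ
  have hK : 0 < #(univ.image f) := card_pos.mpr (univ_nonempty.image f)
  have hcolors : univ.image (fun p : V × V => f p.1 ^^^ f p.2) =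
      image₂ (· ^^^ ·) (range #(univ.image f)) (range #(univ.image f)) := by
    rw [← hf.image_univ_eq_range, image₂_image_left, image₂_image_right,
      ← image_uncurry_product, univ_product_univ]
    rfl
  rw [(hf.boxProd_lexPos hf).FFColors_eq, hf.FFColors_eq, hcolors, image₂_xor_range_self hK,
    card_range]

/-- `FF(G □ G, lex) = 2 ^ ⌈log₂ FF(G, σ)⌉`. -/
theorem FF_boxProd_self_lex_eq_pow {V : Type*} [Fintype V] [Nonempty V]
    (G : SimpleGraph V) (σ : V → ℕ) (hσ : Function.Injective σ) :
    FFColors (G.boxProd G) (lexPos σ σ) = 2 ^ Nat.clog 2 (FFColors G σ) :=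
  FF_boxProd_self_lex_eq_pow_general G σ
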